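/- Let (G,T) be a graft, let F be a minimum join, let X ⊆ V(G) be an extreme set, and let Y, Z ⊆ V(G) be disjoint sets with Y ∪ Z = V(G)∖X, such that no edge of G joins Y and Z, and F contains no edge with both ends in Z and no edge of δ_G(Z). Let (Ĝ, T̂) be a graft with V(Ĝ) ⊇ V(G), E(Ĝ) ⊇ E(G), T̂ = T, such that every edge of E(Ĝ)∖E(G) joins a vertex of X to a vertex of V(Ĝ)∖V(G). Let Ẑ = Z ∪ (V(Ĝ)∖V(G)). If Q is a subgraph of Ĝ with V(Q) ∩ Ẑ ≠ ∅ and Q is either a circuit or a path between a vertex of X and a vertex of X ∪ Ẑ, then w_F(Q) > 0. -/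

import Mathlib

open scoped Classical

variable {V : Type*}

/-- The `F`-weight of a walk: number of edges outside `F` minus number of edges in `F`. -/
noncomputable def walkWeight {G : SimpleGraph V} (F : Set (Sym2 V)) {x y : V}
    (p : G.Walk x y) : ℤ :=
  ((p.edges.filter fun e => e ∉ F).length : ℤ) -
    ((p.edges.filter fun e => e ∈ F).length : ℤ)

/-- The `F`-distance between `x` and `y`: the minimum `F`-weight of a path between them. -/
noncomputable def distF (G : SimpleGraph V) (F : Set (Sym2 V)) (x y : V) : ℤ :=
  sInf {w : ℤ | ∃ p : G.Walk x y, p.IsPath ∧ walkWeight F p = w}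

/-- `F` is a join of the graft `(G, T)`. -/
def IsJoin (G : SimpleGraph V) (T : Set V) (F : Set (Sym2 V)) : Prop :=
  F ⊆ G.edgeSet ∧ ∀ v : V, v ∈ T ↔ Odd {e ∈ F | v ∈ e}.ncard

/-- `F` is a minimum join of the graft `(G, T)`. -/
def IsMinJoin (G : SimpleGraph V) (T : Set V) (F : Set (Sym2 V)) : Prop :=
  IsJoin G T F ∧ ∀ F' : Set (Sym2 V), IsJoin G T F' → F.ncard ≤ F'.ncard

/-- `(G, T)` is a graft: every connected component contains an even number of vertices of `T`. -/
def IsGraft (G : SimpleGraph V) (T : Set V) : Prop :=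
  ∀ v : V, Even {u | u ∈ T ∧ G.Reachable v u}.ncard

/-- `X` is an extreme set: `d_F(x, y) ≥ 0` for all `x, y ∈ X`. -/
def IsExtremeSet (G : SimpleGraph V) (F : Set (Sym2 V)) (X : Set V) : Prop :=
  ∀ x ∈ X, ∀ y ∈ X, 0 ≤ distF G F x y

/-- `G` is bipartite with vertex set `Vset` and color classes `A`, `B`. -/
def IsBipartitionOn (G : SimpleGraph V) (Vset A B : Set V) : Prop :=
  A ∪ B = Vset ∧ Disjoint A B ∧
    ∀ v w : V, G.Adj v w → (v ∈ A ∧ w ∈ B) ∨ (v ∈ B ∧ w ∈ A)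

/-- `X` is a maximal bipartitic extreme set with respect to color classes `A`, `B`. -/
def MaxBipExtreme (G : SimpleGraph V) (F : Set (Sym2 V)) (A B X : Set V) : Prop :=
  IsExtremeSet G F X ∧ (X ⊆ A ∨ X ⊆ B) ∧
    ∀ X' : Set V, IsExtremeSet G F X' → (X' ⊆ A ∨ X' ⊆ B) → X ⊆ X' → X' = X

/-- `D_X`: the vertices of `Vset ∖ X` at negative `F`-distance from `X`. -/
def Dset (G : SimpleGraph V) (F : Set (Sym2 V)) (Vset X : Set V) : Set V :=
  {y | y ∈ Vset ∧ y ∉ X ∧ ∃ x ∈ X, distF G F x y < 0}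

/-- `C_X = Vset ∖ X ∖ D_X`. -/
def Cset (G : SimpleGraph V) (F : Set (Sym2 V)) (Vset X : Set V) : Set V :=
  (Vset \ X) \ Dset G F Vset X

/-- `min_{x ∈ X} d_F(x, y)`. -/
noncomputable def minDistX (G : SimpleGraph V) (F : Set (Sym2 V)) (X : Set V) (y : V) : ℤ :=
  sInf {d : ℤ | ∃ x ∈ X, distF G F x y = d}

/-- The graph `G − S` obtained by deleting the vertices of `S`. -/
def gDelete (G : SimpleGraph V) (S : Set V) : SimpleGraph V where
  Adj v w := G.Adj v w ∧ v ∉ S ∧ w ∉ S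
  symm := ⟨fun v w ⟨h, hv, hw⟩ => ⟨h.symm, hw, hv⟩⟩
  loopless := ⟨fun v h => G.loopless.irrefl v h.1⟩

/-- The subgraph of `G` induced by `S`. -/
def gRestrict (G : SimpleGraph V) (S : Set V) : SimpleGraph V where
  Adj v w := G.Adj v w ∧ v ∈ S ∧ w ∈ S
  symm := ⟨fun v w ⟨h, hv, hw⟩ => ⟨h.symm, hw, hv⟩⟩
  loopless := ⟨fun v h => G.loopless.irrefl v h.1⟩

/-- `C` is (the vertex set of) a connected component of `G − X`. -/
def IsCompOf (G : SimpleGraph V) (X C : Set V) : Prop :=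
  ∃ v, v ∉ X ∧ C = {u | (gDelete G X).Reachable v u}

/-- `δ_G(C)`: the edges of `G` with exactly one end in `C`. -/
def edgeBoundary (G : SimpleGraph V) (C : Set V) : Set (Sym2 V) :=
  {e | e ∈ G.edgeSet ∧ ∃ u v : V, e = s(u, v) ∧ u ∈ C ∧ v ∉ C}

/-- `X` is an `F`-combic set of the graft `(G, T)`. -/
def IsCombic (G : SimpleGraph V) (T : Set V) (F : Set (Sym2 V)) (X : Set V) : Prop :=
  (∀ u v : V, s(u, v) ∈ F → ¬(u ∈ X ∧ v ∈ X)) ∧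
  (∀ C : Set V, IsCompOf G X C → Odd (C ∩ T).ncard →
      (edgeBoundary G C ∩ F).ncard = 1) ∧
  (∀ C : Set V, IsCompOf G X C → Even (C ∩ T).ncard →
      edgeBoundary G C ∩ F = ∅)

/-- The rootlization of `G` by the mount `X`, root `r` and attachment `s`. -/
def rootlize (G : SimpleGraph V) (X : Set V) (r s : V) : SimpleGraph V :=
  SimpleGraph.fromRel fun v w => G.Adj v w ∨ (v = r ∧ w = s) ∨ (v = s ∧ w ∈ X)

/-- The initial component of `r`: the connected component of `r` in the subgraph
induced by the vertices at nonpositive `F`-distance from `r`. -/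
def initComp (G : SimpleGraph V) (F : Set (Sym2 V)) (r : V) : Set V :=
  {x | (gRestrict G {y | distF G F r y ≤ 0}).Reachable r x}

/-!
Write `Ẑ = Z ∪ (V(Ĝ) ∖ V(G))`. No edge of `F` meets `Ẑ`, so every edge at a vertex of `Ẑ` has
weight `+1`, and every neighbour of a vertex of `Ẑ` lies in `X ∪ Ẑ`. A path between two vertices
of `X ∪ Ẑ` therefore has nonnegative weight, by induction on its length: peel off an edge at an
end lying in `Ẑ`, or cut a path between two vertices of `X` at a vertex of `Ẑ`; a path avoiding
`Ẑ` altogether is a path of `G` between vertices of the extreme set `X`. Positivity follows by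
splitting off one edge at a vertex of `Ẑ`, which contributes `+1`.
-/

open SimpleGraph

section WalkWeight

variable {G : SimpleGraph V} {F : Set (Sym2 V)}

lemma walkWeight_nil (a : V) : walkWeight F (Walk.nil : G.Walk a a) = 0 := by
  simp [walkWeight]

lemma walkWeight_cons_of_not_mem {a b u : V} (h : G.Adj a b) (p : G.Walk b u)
    (hab : s(a, b) ∉ F) : walkWeight F (Walk.cons h p) = 1 + walkWeight F p := by
  simp only [walkWeight, Walk.edges_cons, List.filter_cons, hab, not_false_eq_true,
    decide_true, decide_false, List.length_cons, if_true]
  push_cast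
  ring

lemma walkWeight_append {a b c : V} (p : G.Walk a b) (q : G.Walk b c) :
    walkWeight F (p.append q) = walkWeight F p + walkWeight F q := by
  simp only [walkWeight, Walk.edges_append, List.filter_append, List.length_append]
  push_cast
  ring

lemma walkWeight_reverse {a b : V} (p : G.Walk a b) :
    walkWeight F p.reverse = walkWeight F p := by
  simp [walkWeight, Walk.edges_reverse, List.filter_reverse]

lemma walkWeight_takeUntil_add_dropUntil {a b t : V} (p : G.Walk a b) (ht : t ∈ p.support) :
    walkWeight F (p.takeUntil t ht) + walkWeight F (p.dropUntil t ht) = walkWeight F p := by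
  rw [← walkWeight_append, p.take_spec ht]

lemma walkWeight_rotate {v u : V} (c : G.Walk v v) (h : u ∈ c.support) :
    walkWeight F (c.rotate u h) = walkWeight F c := by
  simp only [walkWeight, ((c.rotate_edges u h).perm.filter _).length_eq]

lemma walkWeight_transfer {H : SimpleGraph V} {a b : V} (p : G.Walk a b)
    (hp : ∀ e ∈ p.edges, e ∈ H.edgeSet) : walkWeight F (p.transfer H hp) = walkWeight F p := by
  simp only [walkWeight, Walk.edges_transfer]

lemma neg_length_le_walkWeight {a b : V} (p : G.Walk a b) :
    -(p.length : ℤ) ≤ walkWeight F p := by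
  have := List.length_filter_le (fun e => decide (e ∈ F)) p.edges
  rw [p.length_edges] at this
  unfold walkWeight
  omega

lemma distF_le_walkWeight [Fintype V] {a u : V} {p : G.Walk a u} (hp : p.IsPath) :
    distF G F a u ≤ walkWeight F p := by
  refine csInf_le ⟨-(Fintype.card V : ℤ), ?_⟩ ⟨p, hp, rfl⟩
  rintro w ⟨q, hq, rfl⟩
  have := neg_length_le_walkWeight (F := F) q
  have := hq.length_lt
  omega

lemma IsExtremeSet.walkWeight_nonneg [Fintype V] {H : SimpleGraph V} {X : Set V}
    (hX : IsExtremeSet G F X) {a u : V} {p : H.Walk a u} (hp : p.IsPath)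
    (hpG : ∀ e ∈ p.edges, e ∈ G.edgeSet) (ha : a ∈ X) (hu : u ∈ X) :
    0 ≤ walkWeight F p := by
  rw [← walkWeight_transfer p hpG]
  exact (hX a ha u hu).trans (distF_le_walkWeight (hp.transfer hpG))

end WalkWeight

section Shield

variable {G : SimpleGraph V} {F : Set (Sym2 V)} {X Z : Set V}

lemma walkWeight_cons_pos (hFZ : ∀ e ∈ F, ∀ v ∈ Z, v ∉ e) {a b u : V} (ha : a ∈ Z)
    (h : G.Adj a b) {p : G.Walk b u} (hp : 0 ≤ walkWeight F p) :
    0 < walkWeight F (Walk.cons h p) := by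
  rw [walkWeight_cons_of_not_mem h p fun hF => hFZ _ hF a ha (Sym2.mem_mk_left a b)]
  omega

variable (hFZ : ∀ e ∈ F, ∀ v ∈ Z, v ∉ e) (hnbr : ∀ a b, G.Adj a b → a ∈ Z → b ∈ X ∪ Z)
  (hXZ : Disjoint X Z)
  (hX : ∀ a u (p : G.Walk a u), p.IsPath → a ∈ X → u ∈ X → (∀ t ∈ p.support, t ∉ Z) →
    0 ≤ walkWeight F p)
include hFZ hnbr hXZ hX

lemma walkWeight_nonneg_of_isPath {a u : V} (p : G.Walk a u) (hp : p.IsPath)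
    (ha : a ∈ X ∪ Z) (hu : u ∈ X ∪ Z) : 0 ≤ walkWeight F p := by
  induction hn : p.length using Nat.strong_induction_on generalizing a u with
  | _ n ih =>
  have of_mem_left : ∀ {a u} (p : G.Walk a u), p.length = n → p.IsPath → a ∈ Z → u ∈ X ∪ Z →
      0 ≤ walkWeight F p := by
    intro a u p hn hp ha hu
    cases p with
    | nil => exact (walkWeight_nil a).ge
    | cons h q =>
      rw [Walk.length_cons] at hn
      exact (walkWeight_cons_pos hFZ ha h
        (ih _ (by omega) q hp.of_cons (hnbr _ _ h ha) hu rfl)).le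
  rcases ha with ha | ha
  · rcases hu with hu | hu
    · by_cases hmeet : ∃ t ∈ p.support, t ∈ Z
      · obtain ⟨t, ht, htZ⟩ := hmeet
        have hta : t ≠ a := fun h => hXZ.ne_of_mem ha htZ h.symm
        have htu : t ≠ u := fun h => hXZ.ne_of_mem hu htZ h.symm
        rw [← walkWeight_takeUntil_add_dropUntil p ht]
        exact add_nonneg
          (ih _ (hn ▸ Walk.length_takeUntil_lt_length ht htu) _ (hp.takeUntil ht)
            (.inl ha) (.inr htZ) rfl)
          (ih _ (hn ▸ Walk.length_dropUntil_lt_length ht hta) _ (hp.dropUntil ht)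
            (.inr htZ) (.inl hu) rfl)
      · exact hX a u p hp ha hu fun t ht htZ => hmeet ⟨t, ht, htZ⟩
    · rw [← walkWeight_reverse]
      exact of_mem_left p.reverse (by rw [Walk.length_reverse, hn]) hp.reverse hu (.inl ha)
  · exact of_mem_left p hn hp ha hu

lemma walkWeight_pos_of_isPath_of_mem_left {a u : V} (p : G.Walk a u) (hp : p.IsPath)
    (ha : a ∈ Z) (hu : u ∈ X ∪ Z) (hau : a ≠ u) : 0 < walkWeight F p := by
  cases p with
  | nil => exact absurd rfl hau
  | cons h q =>
    exact walkWeight_cons_pos hFZ ha h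
      (walkWeight_nonneg_of_isPath hFZ hnbr hXZ hX q hp.of_cons (hnbr _ _ h ha) hu)

lemma walkWeight_pos_of_isPath_of_mem_support {a u t : V} (p : G.Walk a u) (hp : p.IsPath)
    (ha : a ∈ X) (hu : u ∈ X ∪ Z) (ht : t ∈ p.support) (htZ : t ∈ Z) :
    0 < walkWeight F p := by
  rw [← walkWeight_takeUntil_add_dropUntil p ht, ← walkWeight_reverse (p.takeUntil t ht)]
  exact add_pos_of_pos_of_nonneg
    (walkWeight_pos_of_isPath_of_mem_left hFZ hnbr hXZ hX _ (hp.takeUntil ht).reverse htZ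
      (.inl ha) fun h => hXZ.ne_of_mem ha htZ h.symm)
    (walkWeight_nonneg_of_isPath hFZ hnbr hXZ hX _ (hp.dropUntil ht) (.inr htZ) hu)

lemma walkWeight_pos_of_isCycle {v t : V} (c : G.Walk v v) (hc : c.IsCycle)
    (ht : t ∈ c.support) (htZ : t ∈ Z) : 0 < walkWeight F c := by
  rw [← walkWeight_rotate c ht]
  have hrot := hc.rotate ht
  obtain ⟨b, h, q, hq⟩ := Walk.not_nil_iff.mp hrot.not_nil
  rw [hq] at hrot ⊢
  exact walkWeight_cons_pos hFZ htZ h (walkWeight_nonneg_of_isPath hFZ hnbr hXZ hX q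
    ((Walk.cons_isCycle_iff q h).mp hrot).1 (hnbr _ _ h htZ) (.inr htZ))

end Shield

section Extension

variable {G Ghat : SimpleGraph V} {Vg X : Set V}
  (hnew : ∀ v w : V, Ghat.Adj v w → ¬ G.Adj v w → (v ∈ X ∧ w ∉ Vg) ∨ (w ∈ X ∧ v ∉ Vg))
include hnew

lemma adj_of_adj_extension {v w : V} (h : Ghat.Adj v w) (hv : v ∈ Vg) (hw : w ∈ Vg) :
    G.Adj v w := by
  by_contra hG
  rcases hnew v w h hG with ⟨-, hw'⟩ | ⟨-, hv'⟩
  exacts [hw' hw, hv' hv]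

lemma edges_mem_edgeSet_of_support_subset {a u : V} (p : Ghat.Walk a u)
    (hp : ∀ t ∈ p.support, t ∈ Vg) : ∀ e ∈ p.edges, e ∈ G.edgeSet := by
  intro e he
  induction e using Sym2.ind with
  | h v w =>
    exact adj_of_adj_extension hnew (p.adj_of_mem_edges he)
      (hp v (p.fst_mem_support_of_mem_edges he)) (hp w (p.snd_mem_support_of_mem_edges he))

lemma mem_union_of_adj_extension {Y Z : Set V} (hGV : ∀ v w : V, G.Adj v w → v ∈ Vg ∧ w ∈ Vg)
    (hYZ : Y ∪ Z = Vg \ X) (hnoedge : ∀ y ∈ Y, ∀ z ∈ Z, ¬ G.Adj y z) {a b : V}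
    (hab : Ghat.Adj a b) (ha : a ∈ Z ∪ Vgᶜ) : b ∈ X ∪ (Z ∪ Vgᶜ) := by
  by_cases hG : G.Adj a b
  · obtain ⟨haV, hbV⟩ := hGV a b hG
    have haZ : a ∈ Z := ha.resolve_right (not_not.2 haV)
    by_cases hbX : b ∈ X
    · exact .inl hbX
    rcases (hYZ ▸ ⟨hbV, hbX⟩ : b ∈ Y ∪ Z) with hbY | hbZ
    · exact absurd hG.symm (hnoedge b hbY a haZ)
    · exact .inr (.inl hbZ)
  · rcases hnew a b hab hG with ⟨-, hb⟩ | ⟨hb, -⟩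
    exacts [.inr (.inr hb), .inl hb]

end Extension

theorem stmt_5_general [Fintype V] (G Ghat : SimpleGraph V) (Vg T Y Z X : Set V)
    (F : Set (Sym2 V))
    (hGV : ∀ v w : V, G.Adj v w → v ∈ Vg ∧ w ∈ Vg)
    (hF : IsMinJoin G T F)
    (hXV : X ⊆ Vg) (hext : IsExtremeSet G F X)
    (hYZ : Y ∪ Z = Vg \ X)
    (hnoedge : ∀ y ∈ Y, ∀ z ∈ Z, ¬ G.Adj y z)
    (hFZ : ∀ e ∈ F, ∀ v ∈ Z, v ∉ e)
    (hnew : ∀ v w : V, Ghat.Adj v w → ¬ G.Adj v w →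
      (v ∈ X ∧ w ∉ Vg) ∨ (w ∈ X ∧ v ∉ Vg)) :
    (∀ (v : V) (Q : Ghat.Walk v v), Q.IsCycle →
      (∃ u ∈ Q.support, u ∈ Z ∪ Vgᶜ) → 0 < walkWeight F Q) ∧
    (∀ (x u : V) (Q : Ghat.Walk x u), Q.IsPath → x ∈ X → u ∈ X ∪ (Z ∪ Vgᶜ) →
      (∃ t ∈ Q.support, t ∈ Z ∪ Vgᶜ) → 0 < walkWeight F Q) := by
  have hZ : Z ⊆ Vg \ X := hYZ ▸ Set.subset_union_right
  have hXZ : Disjoint X (Z ∪ Vgᶜ) := Set.disjoint_union_right.2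
    ⟨Set.disjoint_left.2 fun x hx hz => (hZ hz).2 hx, Set.disjoint_compl_right_iff_subset.2 hXV⟩
  have hFZ' : ∀ e ∈ F, ∀ v ∈ Z ∪ Vgᶜ, v ∉ e := by
    rintro e he v (hv | hv) hve
    · exact hFZ e he v hv hve
    · obtain ⟨w, rfl⟩ := Sym2.mem_iff_exists.1 hve
      exact hv (hGV v w (hF.1.1 he)).1
  have hnbr : ∀ a b, Ghat.Adj a b → a ∈ Z ∪ Vgᶜ → b ∈ X ∪ (Z ∪ Vgᶜ) :=
    fun a b => mem_union_of_adj_extension hnew hGV hYZ hnoedge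
  have hX : ∀ a u (p : Ghat.Walk a u), p.IsPath → a ∈ X → u ∈ X →
      (∀ t ∈ p.support, t ∉ Z ∪ Vgᶜ) → 0 ≤ walkWeight F p :=
    fun a u p hp ha hu hpZ => hext.walkWeight_nonneg hp (edges_mem_edgeSet_of_support_subset
      hnew p fun t ht => not_not.1 fun hV => hpZ t ht (.inr hV)) ha hu
  exact ⟨fun v Q hQ ⟨t, ht, htZ⟩ => walkWeight_pos_of_isCycle hFZ' hnbr hXZ hX Q hQ ht htZ,
    fun x u Q hQ hx hu ⟨t, ht, htZ⟩ =>
      walkWeight_pos_of_isPath_of_mem_support hFZ' hnbr hXZ hX Q hQ hx hu ht htZ⟩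

/-- with `X` extreme, `Y ∪ Z = V(G) ∖ X`, no edge between `Y` and `Z`,
no edge of `F` touching `Z`, and `Ĝ` obtained by adding new vertices joined only to `X`:
every circuit of `Ĝ`, and every path of `Ĝ` between a vertex of `X` and a vertex of
`X ∪ Ẑ`, that meets `Ẑ = Z ∪ (V(Ĝ) ∖ V(G))` has positive `F`-weight. -/
theorem stmt_5 [Fintype V] (G Ghat : SimpleGraph V) (Vg T Y Z X : Set V)
    (F : Set (Sym2 V))
    (hGV : ∀ v w : V, G.Adj v w → v ∈ Vg ∧ w ∈ Vg)
    (hT : T ⊆ Vg) (hGT : IsGraft G T) (hF : IsMinJoin G T F)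
    (hXV : X ⊆ Vg) (hext : IsExtremeSet G F X)
    (hYZdisj : Disjoint Y Z) (hYZ : Y ∪ Z = Vg \ X)
    (hnoedge : ∀ y ∈ Y, ∀ z ∈ Z, ¬ G.Adj y z)
    (hFZ : ∀ e ∈ F, ∀ v ∈ Z, v ∉ e)
    (hsub : G ≤ Ghat)
    (hnew : ∀ v w : V, Ghat.Adj v w → ¬ G.Adj v w →
      (v ∈ X ∧ w ∉ Vg) ∨ (w ∈ X ∧ v ∉ Vg))
    (hGhat : IsGraft Ghat T) :
    (∀ (v : V) (Q : Ghat.Walk v v), Q.IsCycle →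
      (∃ u ∈ Q.support, u ∈ Z ∪ Vgᶜ) → 0 < walkWeight F Q) ∧
    (∀ (x u : V) (Q : Ghat.Walk x u), Q.IsPath → x ∈ X → u ∈ X ∪ (Z ∪ Vgᶜ) →
      (∃ t ∈ Q.support, t ∈ Z ∪ Vgᶜ) → 0 < walkWeight F Q) :=
  stmt_5_general G Ghat Vg T Y Z X F hGV hF hXV hext hYZ hnoedge hFZ hnew
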